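/- arXiv:1402.2598 — 3 statements merged into one kernel-verified Lean document; each statement's English description precedes it below -/
import Mathlib

section
/- Let m ≥ 2, let S_1, …, S_m be real numbers and Y_1, …, Y_m be nonnegative real numbers with order statistics Y_{(1)} ≥ Y_{(2)} ≥ ⋯ ≥ Y_{(m)}. Then for every 1 ≤ k < m, 0 ≤ max_{1≤i≤m}(S_i + Y_i) − max_{1≤i≤m}( S_i + Y_i · 1{Y_i ≥ Y_{(k)}} ) ≤ Y_{(k+1)}. -/
/-!
Truncation only lowers perturbations, so it cannot raise the maximum. Conversely, a truncated
perturbation lies strictly below `Y_{(k)}` and hence at most `Y_{(k+1)}`, while an untruncated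
one is unchanged; so each term `S_i + Y_i` exceeds its truncated version by at most the
nonnegative `Y_{(k+1)}`, and the same holds for the maxima.
-/

theorem ciSup_le_ciSup_add {ι α : Type*} [Finite ι] [Nonempty ι]
    [ConditionallyCompleteLattice α] [Add α] [AddRightMono α]
    {f g : ι → α} {c : α} (h : ∀ i, f i ≤ g i + c) : ⨆ i, f i ≤ (⨆ i, g i) + c :=
  ciSup_le fun i => (h i).trans <| by grw [le_ciSup (Finite.bddAbove_range g) i]

theorem Antitone.apply_le_of_lt_of_comp_perm {m : ℕ} {α : Type*} [LinearOrder α]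
    {Y : Fin m → α} {σ : Equiv.Perm (Fin m)} (hσ : Antitone (Y ∘ σ)) {a b : Fin m}
    (hab : (b : ℕ) ≤ a + 1) {i : Fin m} (hi : Y i < Y (σ a)) : Y i ≤ Y (σ b) := by
  obtain ⟨j, rfl⟩ := σ.surjective i
  have haj : a < j := hσ.reflect_lt hi
  exact hσ (show b ≤ j by omega)

/-- The order statistics are encoded by a permutation `σ` making `Y ∘ σ` nonincreasing, so that
`Y_{(j)} = Y (σ (j - 1))` with zero-based indexing. -/
theorem truncation_error_bounded_by_next_order_statistic
    (m : ℕ) (S : Fin m → ℝ) (Y : Fin m → ℝ) (hY : ∀ i, 0 ≤ Y i)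
    (σ : Equiv.Perm (Fin m)) (hσ : Antitone (Y ∘ σ))
    (k : ℕ) (hkm : k < m) :
    0 ≤ (⨆ i : Fin m, (S i + Y i)) -
        (⨆ i : Fin m, (S i + if Y (σ ⟨k - 1, by omega⟩) ≤ Y i then Y i else 0)) ∧
    (⨆ i : Fin m, (S i + Y i)) -
        (⨆ i : Fin m, (S i + if Y (σ ⟨k - 1, by omega⟩) ≤ Y i then Y i else 0)) ≤
      Y (σ ⟨k, hkm⟩) := by
  have : Nonempty (Fin m) := ⟨⟨k, hkm⟩⟩
  constructor
  · refine sub_nonneg.2 (ciSup_mono (Finite.bddAbove_range _) fun i => ?_)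
    split_ifs <;> linarith [hY i]
  · refine sub_le_iff_le_add'.2 (ciSup_le_ciSup_add fun i => ?_)
    split_ifs with hkept
    · linarith [hY (σ ⟨k, hkm⟩)]
    · linarith [hσ.apply_le_of_lt_of_comp_perm (b := ⟨k, hkm⟩) (by dsimp only; omega)
        (not_le.1 hkept)]
end

section
/- Fix k ∈ ℕ and H-irrelevant data as follows: let x : [0,1] → ℝ be continuous; let y_1, …, y_k > 0 and u_1, …, u_k ∈ (0,1) be pairwise distinct; for each n, let x^{(n)} : [0,1] → ℝ be càdlàg with x^{(n)} → x uniformly on [0,1], and let y_i^{(n)} > 0, u_i^{(n)} ∈ (0,1) (pairwise distinct for each n) with y_i^{(n)} → y_i and u_i^{(n)} → u_i as n → ∞, for i = 1, …, k. Define h(t) = sup_{s∈[0,t]} ( x(s) + Σ_{i=1}^k y_i · 1{s = u_i} ) and h^{(n)}(t) = sup_{s∈[0,t]} ( x^{(n)}(s) + Σ_{i=1}^k y_i^{(n)} · 1{s = u_i^{(n)}} ). Then d(h^{(n)}, h) → 0 as n → ∞, where d is the Skorohod J1 metric on D[0,1]. -/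
open Filter Topology

noncomputable section

/-- A real path is càdlàg on `[0,1]`: right-continuous on `[0,1)` and with left limits
on `(0,1]`. -/
def Cadlag01 (f : ℝ → ℝ) : Prop :=
  (∀ t ∈ Set.Ico (0:ℝ) 1, Filter.Tendsto f (nhdsWithin t (Set.Ici t)) (nhds (f t))) ∧
  (∀ t ∈ Set.Ioc (0:ℝ) 1, ∃ l, Filter.Tendsto f (nhdsWithin t (Set.Iio t)) (nhds l))

/-- The Skorohod `J1` distance on paths over `[0,1]`:
`d(f,g) = inf_λ max( sup_{t∈[0,1]} |λ(t) - t|, sup_{t∈[0,1]} |f(t) - g(λ(t))| )`,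
the infimum over all continuous strictly increasing bijections `λ : [0,1] → [0,1]`. -/
noncomputable def skorohodDist (f g : ℝ → ℝ) : ℝ :=
  sInf {r : ℝ | ∃ lam : ℝ → ℝ,
    ContinuousOn lam (Set.Icc 0 1) ∧ StrictMonoOn lam (Set.Icc 0 1) ∧
    Set.BijOn lam (Set.Icc 0 1) (Set.Icc 0 1) ∧
    r = max (⨆ s : Set.Icc (0:ℝ) 1, |lam s.1 - s.1|)
            (⨆ s : Set.Icc (0:ℝ) 1, |f s.1 - g (lam s.1)|)}

/-!
A time change `λ` of `[0,1]` that moves each `u_i^{(n)}` onto `u_i` and displaces no point by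
much turns the glued path of `h`, read along `λ`, into `x ∘ λ` carrying the weights `y_i` at the
same locations `u_i^{(n)}` as the glued path of `h^{(n)}`. The two glued paths then differ by at
most `|x^{(n)} - x ∘ λ| + Σ |y_i^{(n)} - y_i|`, which is small by uniform convergence and uniform
continuity of `x`, and running suprema do not increase this distance. Such a `λ` exists for `n`
large: it is a composition of piecewise linear slides supported on disjoint intervals around the
distinct `u_i`.
-/

open Set Function

theorem max_min_max_min_eq_of_mul_nonpos {a b t : ℝ} (h : (a - t) * (b - t) ≤ 0) :
    max (min a b) (min (max a b) t) = t := by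
  rcases mul_nonpos_iff.1 h with ⟨ha, hb⟩ | ⟨ha, hb⟩
  · simp only [sub_nonneg, sub_nonpos] at ha hb
    simp [min_eq_right (hb.trans ha), max_eq_left (hb.trans ha), hb, ha]
  · simp only [sub_nonneg, sub_nonpos] at ha hb
    simp [min_eq_left (ha.trans hb), max_eq_right (ha.trans hb), hb, ha]

/-- The median of `t` and the two lines through `(p, q)` that pass through `(c, c)` and `(d, d)`. -/
def slideMap (c d p q t : ℝ) : ℝ :=
  max (min (q + (q - c) / (p - c) * (t - p)) (q + (d - q) / (d - p) * (t - p)))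
    (min (max (q + (q - c) / (p - c) * (t - p)) (q + (d - q) / (d - p) * (t - p))) t)

section slideMap

variable {c d p q : ℝ}

theorem continuous_slideMap : Continuous (slideMap c d p q) := by
  unfold slideMap
  fun_prop

theorem slideMap_self : slideMap c d p q p = q := by
  simp [slideMap]

theorem strictMono_slideMap (hp : p ∈ Ioo c d) (hq : q ∈ Ioo c d) :
    StrictMono (slideMap c d p q) := by
  have line {a : ℝ} (ha : 0 < a) : StrictMono fun t => q + a * (t - p) := fun s t hst => by
    dsimp only
    nlinarith
  have h₁ := line (div_pos (sub_pos.2 hq.1) (sub_pos.2 hp.1))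
  have h₂ := line (div_pos (sub_pos.2 hq.2) (sub_pos.2 hp.2))
  intro s t hst
  exact max_lt_max (min_lt_min (h₁ hst) (h₂ hst)) (min_lt_min (max_lt_max (h₁ hst) (h₂ hst)) hst)

theorem slideMap_eq_self (hp : p ∈ Ioo c d) {t : ℝ} (ht : t ∉ Ioo c d) :
    slideMap c d p q t = t := by
  have hpc : p - c ≠ 0 := (sub_pos.2 hp.1).ne'
  have hdp : d - p ≠ 0 := (sub_pos.2 hp.2).ne'
  apply max_min_max_min_eq_of_mul_nonpos
  have key : (q + (q - c) / (p - c) * (t - p) - t) * (q + (d - q) / (d - p) * (t - p) - t)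
      = (q - p) ^ 2 / ((p - c) * (d - p)) * ((t - c) * (d - t)) := by
    field_simp
    ring
  rw [key]
  refine mul_nonpos_of_nonneg_of_nonpos (div_nonneg (sq_nonneg _) ?_) ?_
  · exact (mul_pos (sub_pos.2 hp.1) (sub_pos.2 hp.2)).le
  · rw [mem_Ioo, not_and_or, not_lt, not_lt] at ht
    rcases ht with ht | ht
    · exact mul_nonpos_of_nonpos_of_nonneg (by linarith) (by linarith [hp.1, hp.2])
    · exact mul_nonpos_of_nonneg_of_nonpos (by linarith [hp.1, hp.2]) (by linarith)

theorem slideMap_mem_Icc (hp : p ∈ Ioo c d) (hq : q ∈ Ioo c d) {t : ℝ} (ht : t ∈ Icc c d) :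
    slideMap c d p q t ∈ Icc c d := by
  have hmono := (strictMono_slideMap hp hq).monotone
  have hc := slideMap_eq_self (q := q) hp (t := c) (by simp)
  have hd := slideMap_eq_self (q := q) hp (t := d) (by simp)
  exact ⟨hc.ge.trans (hmono ht.1), (hmono ht.2).trans hd.le⟩

end slideMap

theorem exists_continuous_strictMono_of_pairwise_disjoint_Icc {ι : Type*} (s : Finset ι)
    {c d p q : ι → ℝ} (hp : ∀ i, p i ∈ Ioo (c i) (d i)) (hq : ∀ i, q i ∈ Ioo (c i) (d i))
    (hdisj : Pairwise (Disjoint on fun i => Icc (c i) (d i))) :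
    ∃ f : ℝ → ℝ, Continuous f ∧ StrictMono f ∧ (∀ i ∈ s, f (p i) = q i) ∧
      ∀ t, f t = t ∨ ∃ i ∈ s, t ∈ Icc (c i) (d i) ∧ f t ∈ Icc (c i) (d i) := by
  classical
  have notMem {i j : ι} (hij : i ≠ j) {t : ℝ} (ht : t ∈ Icc (c i) (d i)) :
      t ∉ Ioo (c j) (d j) := fun h => disjoint_left.1 (hdisj hij) ht (Ioo_subset_Icc_self h)
  induction s using Finset.induction_on with
  | empty => exact ⟨id, continuous_id, strictMono_id, by simp, fun t => .inl rfl⟩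
  | insert j s hj ih =>
    obtain ⟨f, hfc, hfm, hfp, hf⟩ := ih
    have hne {i : ι} (hi : i ∈ s) : i ≠ j := ne_of_mem_of_not_mem hi hj
    let g := slideMap (c j) (d j) (p j) (q j)
    have hg_fix {t : ℝ} (ht : t ∉ Ioo (c j) (d j)) : g t = t := slideMap_eq_self (hp j) ht
    refine ⟨g ∘ f, continuous_slideMap.comp hfc, (strictMono_slideMap (hp j) (hq j)).comp hfm,
      ?_, fun t => ?_⟩
    · have hfpj : f (p j) = p j := by
        rcases hf (p j) with h | ⟨i, hi, hpi, -⟩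
        · exact h
        · exact absurd (hp j) (notMem (hne hi) hpi)
      simp only [Finset.forall_mem_insert, comp_apply, hfpj]
      refine ⟨slideMap_self, fun i hi => ?_⟩
      rw [hfp i hi, hg_fix (notMem (hne hi) (Ioo_subset_Icc_self (hq i)))]
    · rcases hf t with h | ⟨i, hi, hti, hfti⟩
      · by_cases htj : t ∈ Icc (c j) (d j)
        · refine .inr ⟨j, Finset.mem_insert_self j s, htj, ?_⟩
          simpa only [comp_apply, h] using slideMap_mem_Icc (hp j) (hq j) htj
        · have htj' : t ∉ Ioo (c j) (d j) := fun h' => htj (Ioo_subset_Icc_self h')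
          exact .inl (by simp only [comp_apply, h, hg_fix htj'])
      · refine .inr ⟨i, Finset.mem_insert_of_mem hi, hti, ?_⟩
        simpa only [comp_apply, hg_fix (notMem (hne hi) hfti)] using hfti

theorem eventually_exists_timeChange {ι : Type*} [Fintype ι] {u : ι → ℝ}
    (hu : ∀ i, u i ∈ Ioo 0 1) (hinj : Injective u) {ε : ℝ} (hε : 0 < ε) :
    ∀ᶠ v in 𝓝 u, ∃ f : ℝ → ℝ, Continuous f ∧ StrictMono f ∧ f 0 = 0 ∧ f 1 = 1 ∧
      (∀ i, f (v i) = u i) ∧ ∀ t, |f t - t| ≤ ε := by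
  have hsep : ∀ i j, ∀ᶠ δ in 𝓝 (0:ℝ), i ≠ j → δ < dist (u i) (u j) / 2 := fun i j => by
    by_cases hij : i = j
    · simp [hij]
    · filter_upwards [eventually_lt_nhds (half_pos (dist_pos.2 (hinj.ne hij)))] with δ h _
      exact h
  obtain ⟨δ, hδ, hδε, hδu, hδsep⟩ : ∃ δ : ℝ, 0 < δ ∧ δ < ε / 2 ∧
      (∀ i, δ < u i ∧ δ < 1 - u i) ∧ ∀ i j, i ≠ j → δ < dist (u i) (u j) / 2 := by
    have hsmall : ∀ᶠ δ in 𝓝 (0:ℝ), δ < ε / 2 ∧ (∀ i, δ < u i ∧ δ < 1 - u i) ∧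
        ∀ i j, i ≠ j → δ < dist (u i) (u j) / 2 :=
      (eventually_lt_nhds (half_pos hε)).and
        ((eventually_all.2 fun i => (eventually_lt_nhds (hu i).1).and
          (eventually_lt_nhds (sub_pos.2 (hu i).2))).and
          (eventually_all.2 fun i => eventually_all.2 (hsep i)))
    exact (eventually_mem_nhdsWithin.and (hsmall.filter_mono nhdsWithin_le_nhds)).exists
      (f := 𝓝[>] (0:ℝ))
  filter_upwards [Metric.ball_mem_nhds u hδ] with v hv
  have hvu (i : ι) : |v i - u i| < δ := (dist_le_pi_dist v u i).trans_lt hv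
  obtain ⟨f, hfc, hfm, hfv, hf⟩ := exists_continuous_strictMono_of_pairwise_disjoint_Icc
    Finset.univ (c := fun i => u i - δ) (d := fun i => u i + δ) (p := v) (q := u)
    (fun i => ⟨by linarith [(abs_lt.1 (hvu i)).1], by linarith [(abs_lt.1 (hvu i)).2]⟩)
    (fun i => ⟨by linarith, by linarith⟩)
    (fun i j hij => by
      simpa only [onFun, ← Real.closedBall_eq_Icc] using
        Metric.closedBall_disjoint_closedBall (by linarith [hδsep i j hij]))
  have fix_of_notMem {t : ℝ} (ht : ∀ i, t ∉ Icc (u i - δ) (u i + δ)) : f t = t :=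
    (hf t).resolve_right fun ⟨i, _, hti, _⟩ => ht i hti
  refine ⟨f, hfc, hfm, fix_of_notMem fun i h => ?_, fix_of_notMem fun i h => ?_,
    fun i => hfv i (Finset.mem_univ i), fun t => ?_⟩
  · linarith [h.1, (hδu i).1]
  · linarith [h.2, (hδu i).2]
  · rcases hf t with h | ⟨i, -, ht, hft⟩
    · rw [h, sub_self, abs_zero]
      exact hε.le
    · rw [abs_le]
      constructor <;> linarith [ht.1, ht.2, hft.1, hft.2]

theorem skorohodDist_nonneg (f g : ℝ → ℝ) : 0 ≤ skorohodDist f g :=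
  Real.sInf_nonneg <| by
    rintro r ⟨lam, -, -, -, rfl⟩
    exact (Real.iSup_nonneg fun s => abs_nonneg _).trans (le_max_left _ _)

theorem skorohodDist_le_of_forall_le {f g lam : ℝ → ℝ} {ε : ℝ} (hc : Continuous lam)
    (hm : StrictMono lam) (h0 : lam 0 = 0) (h1 : lam 1 = 1)
    (hlam : ∀ t ∈ Icc (0:ℝ) 1, |lam t - t| ≤ ε)
    (hfg : ∀ t ∈ Icc (0:ℝ) 1, |f t - g (lam t)| ≤ ε) :
    skorohodDist f g ≤ ε := by
  have hbij : BijOn lam (Icc 0 1) (Icc 0 1) := by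
    have := hm.injective.injOn.bijOn_image (s := Icc 0 1)
    rwa [hc.image_Icc_of_strictMono hm, h0, h1] at this
  refine le_trans (csInf_le ⟨0, ?_⟩ ⟨lam, hc.continuousOn, hm.strictMonoOn _, hbij, rfl⟩)
    (max_le (ciSup_le fun s => hlam s s.2) (ciSup_le fun s => hfg s s.2))
  rintro r ⟨lam, -, -, -, rfl⟩
  exact (Real.iSup_nonneg fun s => abs_nonneg _).trans (le_max_left _ _)

theorem abs_ciSup_sub_ciSup_le {ι : Sort*} [Nonempty ι] {a b : ι → ℝ} {C : ℝ}
    (hb : BddAbove (range b)) (h : ∀ i, |a i - b i| ≤ C) : |(⨆ i, a i) - ⨆ i, b i| ≤ C := by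
  have hab (i : ι) := abs_sub_le_iff.1 (h i)
  obtain ⟨B, hB⟩ := hb
  have ha : BddAbove (range a) :=
    ⟨B + C, forall_mem_range.2 fun i => by linarith [(hab i).1, hB (mem_range_self i)]⟩
  rw [abs_sub_le_iff, sub_le_iff_le_add, sub_le_iff_le_add]
  exact ⟨ciSup_le fun i => by linarith [(hab i).1, le_ciSup ⟨B, hB⟩ i],
    ciSup_le fun i => by linarith [(hab i).2, le_ciSup ha i]⟩

def runningSup (f : ℝ → ℝ) (t : ℝ) : ℝ :=
  ⨆ s : Icc (0:ℝ) t, f s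

theorem runningSup_comp {f lam : ℝ → ℝ} (hc : Continuous lam) (hm : StrictMono lam)
    (h0 : lam 0 = 0) (t : ℝ) : runningSup f (lam t) = runningSup (f ∘ lam) t := by
  calc runningSup f (lam t) = sSup (f '' Icc (lam 0) (lam t)) := by
        rw [h0, runningSup, sSup_image']
    _ = runningSup (f ∘ lam) t := by
        rw [← hc.image_Icc_of_strictMono hm, image_image, runningSup, sSup_image']
        rfl

theorem abs_runningSup_sub_runningSup_le {f g : ℝ → ℝ} {t C : ℝ} (ht : 0 ≤ t)
    (hg : BddAbove (g '' Icc 0 t)) (h : ∀ s ∈ Icc 0 t, |f s - g s| ≤ C) :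
    |runningSup f t - runningSup g t| ≤ C :=
  have : Nonempty (Icc 0 t) := ⟨⟨0, le_rfl, ht⟩⟩
  abs_ciSup_sub_ciSup_le (by rwa [← image_eq_range]) fun s => h s s.2

def gluePoints {ι : Type*} [Fintype ι] (x : ℝ → ℝ) (y u : ι → ℝ) (s : ℝ) : ℝ :=
  x s + ∑ i, if s = u i then y i else 0

section gluePoints

variable {ι : Type*} [Fintype ι]

theorem gluePoints_comp {x lam : ℝ → ℝ} {y u v : ι → ℝ} (hlam : Injective lam)
    (hv : ∀ i, lam (v i) = u i) : gluePoints x y u ∘ lam = gluePoints (x ∘ lam) y v := by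
  ext s
  simp only [gluePoints, comp_apply, ← hv, hlam.eq_iff]

theorem abs_gluePoints_sub_gluePoints_le (x x' : ℝ → ℝ) (y y' u : ι → ℝ) (s : ℝ) :
    |gluePoints x y u s - gluePoints x' y' u s| ≤ |x s - x' s| + ∑ i, |y i - y' i| := by
  rw [gluePoints, gluePoints, add_sub_add_comm, ← Finset.sum_sub_distrib]
  refine (abs_add_le _ _).trans (add_le_add le_rfl ((Finset.abs_sum_le_sum_abs _ _).trans
    (Finset.sum_le_sum fun i _ => ?_)))
  split_ifs <;> simp

theorem bddAbove_gluePoints_image {x : ℝ → ℝ} {S : Set ℝ} (hx : BddAbove (x '' S))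
    (y u : ι → ℝ) : BddAbove (gluePoints x y u '' S) := by
  obtain ⟨B, hB⟩ := hx
  refine ⟨B + ∑ i, |y i|, forall_mem_image.2 fun s hs => add_le_add (hB (mem_image_of_mem x hs))
    (Finset.sum_le_sum fun i _ => ?_)⟩
  split_ifs
  exacts [le_abs_self _, abs_nonneg _]

theorem skorohodDist_runningSup_gluePoints_le {x x' lam : ℝ → ℝ} {y y' u u' : ι → ℝ} {ε : ℝ}
    (hx : BddAbove (x '' Icc 0 1)) (hc : Continuous lam) (hm : StrictMono lam)
    (h0 : lam 0 = 0) (h1 : lam 1 = 1) (hu : ∀ i, lam (u' i) = u i)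
    (hlam : ∀ t ∈ Icc (0:ℝ) 1, |lam t - t| ≤ ε)
    (hclose : ∀ t ∈ Icc (0:ℝ) 1, |x' t - x (lam t)| + ∑ i, |y' i - y i| ≤ ε) :
    skorohodDist (runningSup (gluePoints x' y' u')) (runningSup (gluePoints x y u)) ≤ ε := by
  refine skorohodDist_le_of_forall_le hc hm h0 h1 hlam fun t ht => ?_
  have hmaps : MapsTo lam (Icc 0 t) (Icc 0 1) := fun s hs =>
    ⟨h0 ▸ hm.monotone hs.1, h1 ▸ hm.monotone (hs.2.trans ht.2)⟩
  rw [runningSup_comp hc hm h0, gluePoints_comp hm.injective hu]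
  refine abs_runningSup_sub_runningSup_le ht.1 ?_ fun s hs =>
    (abs_gluePoints_sub_gluePoints_le _ _ _ _ _ s).trans (hclose s ⟨hs.1, hs.2.trans ht.2⟩)
  exact bddAbove_gluePoints_image (hx.mono (image_comp x lam _ ▸ image_mono hmaps.image_subset)) _ _

end gluePoints

theorem skorohod_continuity_of_glued_running_max_general
    (k : ℕ) (x : ℝ → ℝ) (hx : ContinuousOn x (Set.Icc 0 1))
    (y : Fin k → ℝ)
    (u : Fin k → ℝ) (hu : ∀ i, u i ∈ Set.Ioo (0:ℝ) 1) (huinj : Function.Injective u)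
    (xn : ℕ → ℝ → ℝ)
    (hxconv : TendstoUniformlyOn xn x atTop (Set.Icc 0 1))
    (yn : ℕ → Fin k → ℝ)
    (un : ℕ → Fin k → ℝ)
    (hyconv : ∀ i, Tendsto (fun n => yn n i) atTop (𝓝 (y i)))
    (huconv : ∀ i, Tendsto (fun n => un n i) atTop (𝓝 (u i))) :
    Tendsto (fun n => skorohodDist
        (fun t => ⨆ s : Set.Icc (0:ℝ) t, (xn n s.1 + ∑ i, if s.1 = un n i then yn n i else 0))
        (fun t => ⨆ s : Set.Icc (0:ℝ) t, (x s.1 + ∑ i, if s.1 = u i then y i else 0)))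
      atTop (𝓝 0) := by
  have hdy : Tendsto (fun n => ∑ i, |yn n i - y i|) atTop (𝓝 0) := by
    simpa using tendsto_finsetSum Finset.univ fun i _ => ((hyconv i).sub_const (y i)).abs
  refine tendsto_order.2 ⟨fun a ha => .of_forall fun n => ha.trans_le (skorohodDist_nonneg _ _),
    fun ε hε => ?_⟩
  obtain ⟨η, hη, hxη⟩ := Metric.uniformContinuousOn_iff.1
    (isCompact_Icc.uniformContinuousOn_of_continuous hx) (ε / 6) (by positivity)
  filter_upwards [(tendsto_pi_nhds.2 huconv).eventually
      (eventually_exists_timeChange hu huinj (lt_min (half_pos hε) (half_pos hη))),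
    Metric.tendstoUniformlyOn_iff.1 hxconv (ε / 6) (by positivity),
    hdy.eventually (gt_mem_nhds (by positivity : (0:ℝ) < ε / 6))]
    with n ⟨lam, hc, hm, h0, h1, hlu, hlam⟩ hxn hdyn
  refine (skorohodDist_runningSup_gluePoints_le (isCompact_Icc.bddAbove_image hx) hc hm h0 h1 hlu
    (fun t _ => (hlam t).trans (min_le_left _ _)) fun t ht => ?_).trans_lt (half_lt_self hε)
  have hlt : lam t ∈ Icc 0 1 := ⟨h0 ▸ hm.monotone ht.1, h1 ▸ hm.monotone ht.2⟩
  have hx₁ := hxn t ht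
  have hx₂ := hxη t ht (lam t) hlt <| by
    rw [dist_comm, Real.dist_eq]
    linarith [(hlam t).trans (min_le_right _ _)]
  rw [Real.dist_eq, abs_sub_comm] at hx₁
  rw [Real.dist_eq] at hx₂
  linarith [abs_sub_le (xn n t) (x t) (x (lam t))]

/-- Sequential continuity, in the Skorohod `J1` metric, of the map gluing `k` positive
shots at pairwise distinct locations in `(0,1)` onto a continuous path and taking the
running maximum: if `x^{(n)} → x` uniformly on `[0,1]`, `y_i^{(n)} → y_i` and
`u_i^{(n)} → u_i`, then `d(h^{(n)}, h) → 0`, where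
`h(t) = sup_{s ∈ [0,t]} (x(s) + Σ_{i=1}^k y_i 1{s = u_i})` and similarly for `h^{(n)}`. -/
theorem skorohod_continuity_of_glued_running_max
    (k : ℕ) (x : ℝ → ℝ) (hx : ContinuousOn x (Set.Icc 0 1))
    (y : Fin k → ℝ) (hy : ∀ i, 0 < y i)
    (u : Fin k → ℝ) (hu : ∀ i, u i ∈ Set.Ioo (0:ℝ) 1) (huinj : Function.Injective u)
    (xn : ℕ → ℝ → ℝ) (hxn : ∀ n, Cadlag01 (xn n))
    (hxconv : TendstoUniformlyOn xn x atTop (Set.Icc 0 1))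
    (yn : ℕ → Fin k → ℝ) (hyn : ∀ n i, 0 < yn n i)
    (un : ℕ → Fin k → ℝ) (hun : ∀ n i, un n i ∈ Set.Ioo (0:ℝ) 1)
    (huninj : ∀ n, Function.Injective (un n))
    (hyconv : ∀ i, Tendsto (fun n => yn n i) atTop (𝓝 (y i)))
    (huconv : ∀ i, Tendsto (fun n => un n i) atTop (𝓝 (u i))) :
    Tendsto (fun n => skorohodDist
        (fun t => ⨆ s : Set.Icc (0:ℝ) t, (xn n s.1 + ∑ i, if s.1 = un n i then yn n i else 0))
        (fun t => ⨆ s : Set.Icc (0:ℝ) t, (x s.1 + ∑ i, if s.1 = u i then y i else 0)))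
      atTop (𝓝 0) :=
  skorohod_continuity_of_glued_running_max_general k x hx y u hu huinj xn hxconv yn un hyconv huconv
end
end

section
/- Let m ∈ ℕ, let S_0, S_1, …, S_m and Y_0, Y_1, …, Y_m be real numbers with Y_0 ≥ 0. For 0 ≤ j ≤ m let τ(j) = max{ i ≤ j : Y_i ≥ 0 } (well defined since Y_0 ≥ 0). Then max_{0≤j≤m} ( S_j + max(Y_j, 0) ) ≤ max_{0≤j≤m, Y_j ≥ 0} ( S_j + Y_j ) + max_{0≤j≤m} ( S_j − S_{τ(j)} ). -/
/-! If `Y j ≥ 0` then `j` is its own last nonnegative index, and otherwise the truncation `max (Y j) 0`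
vanishes; either way `S j + max (Y j) 0 ≤ (S (τ j) + Y (τ j)) + (S j - S (τ j))`, and the two
summands are bounded by the two suprema. -/

theorem ciSup_le_ciSup_add_ciSup_of_le {ι κ α : Type*} [Nonempty ι] [ConditionallyCompleteLattice α]
    [AddCommMonoid α] [AddLeftMono α] [AddRightMono α] {f h : ι → α} {g : κ → α} (σ : ι → κ)
    (hg : BddAbove (Set.range g)) (hh : BddAbove (Set.range h)) (hf : ∀ j, f j ≤ g (σ j) + h j) :
    ⨆ j, f j ≤ (⨆ k, g k) + ⨆ j, h j :=
  ciSup_le fun j => (hf j).trans (add_le_add (le_ciSup hg (σ j)) (le_ciSup hh j))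

theorem max_zero_le_of_isGreatest {ι β : Type*} [PartialOrder ι] [LinearOrder β] [Zero β]
    {Y : ι → β} {i j : ι} (hi : IsGreatest {k | k ≤ j ∧ 0 ≤ Y k} i) : max (Y j) 0 ≤ Y i := by
  rcases le_or_gt 0 (Y j) with hj | hj
  · have hij : i = j := le_antisymm hi.1.1 (hi.2 ⟨le_rfl, hj⟩)
    simp [hij, hj]
  · simpa [hj.le] using hi.1.2

theorem zero_truncation_bounded_by_gap_fluctuation_general
    (m : ℕ) (S Y : Fin (m+1) → ℝ)
    (τ : Fin (m+1) → Fin (m+1))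
    (hτ : ∀ j, τ j ≤ j ∧ 0 ≤ Y (τ j) ∧ ∀ i, i ≤ j → 0 ≤ Y i → i ≤ τ j) :
    (⨆ j : Fin (m+1), (S j + max (Y j) 0)) ≤
      (⨆ j : {j : Fin (m+1) // 0 ≤ Y j}, (S j.1 + Y j.1)) +
        ⨆ j : Fin (m+1), (S j - S (τ j)) := by
  refine ciSup_le_ciSup_add_ciSup_of_le (fun j => ⟨τ j, (hτ j).2.1⟩)
    (Set.finite_range _).bddAbove (Set.finite_range _).bddAbove fun j => ?_
  obtain ⟨hτj_le, hτj_nonneg, hτj_last⟩ := hτ j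
  have htrunc : max (Y j) 0 ≤ Y (τ j) :=
    max_zero_le_of_isGreatest ⟨⟨hτj_le, hτj_nonneg⟩, fun i hi => hτj_last i hi.1 hi.2⟩
  dsimp only
  linarith

/-- Let `Y_0 ≥ 0` and, for `0 ≤ j ≤ m`, let `τ(j) = max{i ≤ j : Y_i ≥ 0}`. Then
`max_{0≤j≤m} (S_j + max(Y_j,0))
  ≤ max_{0≤j≤m, Y_j≥0} (S_j + Y_j) + max_{0≤j≤m} (S_j - S_{τ(j)})`. -/
theorem zero_truncation_bounded_by_gap_fluctuation
    (m : ℕ) (S Y : Fin (m+1) → ℝ) (hY0 : 0 ≤ Y 0)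
    (τ : Fin (m+1) → Fin (m+1))
    (hτ : ∀ j, τ j ≤ j ∧ 0 ≤ Y (τ j) ∧ ∀ i, i ≤ j → 0 ≤ Y i → i ≤ τ j) :
    (⨆ j : Fin (m+1), (S j + max (Y j) 0)) ≤
      (⨆ j : {j : Fin (m+1) // 0 ≤ Y j}, (S j.1 + Y j.1)) +
        ⨆ j : Fin (m+1), (S j - S (τ j)) :=
  zero_truncation_bounded_by_gap_fluctuation_general m S Y τ hτ
end
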